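/- Let f_m, g : (0,1] → ℝ be integrable with ∫_{(j−1)/m}^{j/m} f_m = ∫_{(j−1)/m}^{j/m} g for all j = 1,…,m, where f_m is constant on each interval ((j−1)/m, j/m]. Then for every real t, |∫₀¹ (e^{it f_m(u)} − e^{it g(u)}) du| ≤ (t²/2) ∫₀¹ (f_m(u) − g(u))² du. -/

import Mathlib

/-!
On a block where `f` equals a constant `c`, factor out the unimodular `exp (itc)`: what remains
is `∫ (exp (i h) - 1)` with `h = t (g - c)` of mean zero. Subtracting the vanishing linear term
`∫ i h` leaves `∫ (exp (i h) - 1 - i h)`, and the second-order Taylor bound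
`‖exp (i x) - 1 - i x‖ ≤ x² / 2` bounds it by `(t² / 2) ∫ (f - g)²`. Summing over the blocks
gives the claim.
-/

open MeasureTheory Complex

theorem norm_exp_I_mul_ofReal_sub_one_sub_le (x : ℝ) :
    ‖exp (I * x) - 1 - I * x‖ ≤ x ^ 2 / 2 := by
  -- fence `φ` on `[0, 1]` by `s ↦ x² s² / 2`, using `‖exp (I y) - 1‖ ≤ |y|` for the derivative
  set φ : ℝ → ℂ := fun s => exp (I * ↑(s * x)) - 1 - I * ↑(s * x)
  have hφ (s : ℝ) : HasDerivAt φ (I * x * (exp (I * ↑(s * x)) - 1)) s := by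
    have hlin : HasDerivAt (fun s : ℝ => I * ↑(s * x)) (I * x) s := by
      simpa using ((hasDerivAt_id s).ofReal_comp.mul_const (x : ℂ)).const_mul I
    exact ((hlin.cexp.sub_const 1).sub hlin).congr_deriv (by ring)
  have hB (s : ℝ) : HasDerivAt (fun s : ℝ => x ^ 2 * s ^ 2 / 2) (x ^ 2 * s) s :=
    (((hasDerivAt_pow 2 s).const_mul (x ^ 2)).div_const 2).congr_deriv (by push_cast; ring)
  have key := image_norm_le_of_norm_deriv_right_le_deriv_boundary (a := 0) (b := 1)
    (fun s _ => (hφ s).continuousAt.continuousWithinAt) (fun s _ => (hφ s).hasDerivWithinAt)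
    (by simp [φ]) hB (fun s hs => ?_) (Set.right_mem_Icc.mpr zero_le_one)
  · simpa [φ] using key
  calc ‖I * x * (exp (I * ↑(s * x)) - 1)‖ ≤ |x| * |s * x| := by
        rw [norm_mul, norm_mul, norm_I, one_mul, norm_real, Real.norm_eq_abs]
        gcongr
        exact Real.norm_exp_I_mul_ofReal_sub_one_le
    _ = x ^ 2 * s := by
        rw [abs_mul, abs_of_nonneg hs.1, ← sq_abs x]; ring

theorem integrable_exp_I_mul_ofReal {α : Type*} [MeasurableSpace α] {μ : Measure α}
    [IsFiniteMeasure μ] {h : α → ℝ} (hh : AEStronglyMeasurable h μ) :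
    Integrable (fun u => exp (I * h u)) μ :=
  .of_bound (by fun_prop) 1 (.of_forall fun u => (norm_exp_I_mul_ofReal (h u)).le)

theorem norm_integral_exp_I_mul_sub_one_le {α : Type*} [MeasurableSpace α] {μ : Measure α}
    [IsFiniteMeasure μ] {h : α → ℝ} (hh : Integrable h μ)
    (hh2 : Integrable (fun u => h u ^ 2) μ) (hmean : ∫ u, h u ∂μ = 0) :
    ‖∫ u, (exp (I * h u) - 1) ∂μ‖ ≤ (∫ u, h u ^ 2 ∂μ) / 2 := by
  have hlin : Integrable (fun u => I * (h u : ℂ)) μ := hh.ofReal.const_mul I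
  have hlin_zero : ∫ u, I * (h u : ℂ) ∂μ = 0 := by
    rw [integral_const_mul, integral_complex_ofReal, hmean, ofReal_zero, mul_zero]
  have hsplit : ∫ u, (exp (I * h u) - 1) ∂μ = ∫ u, (exp (I * h u) - 1 - I * h u) ∂μ := by
    rw [integral_sub _ hlin, hlin_zero, sub_zero]
    exact (integrable_exp_I_mul_ofReal hh.aestronglyMeasurable).sub (integrable_const 1)
  rw [hsplit, ← integral_div]
  exact norm_integral_le_of_norm_le (hh2.div_const 2)
    (.of_forall fun u => norm_exp_I_mul_ofReal_sub_one_sub_le (h u))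

theorem norm_integral_exp_sub_exp_le_of_ae_eq_const {α : Type*} [MeasurableSpace α]
    {μ : Measure α} [IsFiniteMeasure μ] {f g : α → ℝ} {c : ℝ} (hfc : ∀ᵐ u ∂μ, f u = c)
    (hg : Integrable g μ) (hsq : Integrable (fun u => (f u - g u) ^ 2) μ)
    (hint : ∫ u, f u ∂μ = ∫ u, g u ∂μ) (t : ℝ) :
    ‖∫ u, (exp (I * t * f u) - exp (I * t * g u)) ∂μ‖ ≤ t ^ 2 / 2 * ∫ u, (f u - g u) ^ 2 ∂μ := by
  set h : α → ℝ := fun u => t * (g u - c)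
  have hfactor : ∀ᵐ u ∂μ, exp (I * t * f u) - exp (I * t * g u)
      = -exp (I * ↑(t * c)) * (exp (I * h u) - 1) := by
    filter_upwards [hfc] with u hu
    have hexp : exp (I * t * g u) = exp (I * ↑(t * c)) * exp (I * h u) := by
      rw [← exp_add]; push_cast [h]; ring_nf
    rw [hexp, hu]; push_cast; ring_nf
  have hsq_h : ∀ᵐ u ∂μ, h u ^ 2 = t ^ 2 * (f u - g u) ^ 2 := by
    filter_upwards [hfc] with u hu
    rw [hu]; ring
  have hmean : ∫ u, h u ∂μ = 0 := by
    rw [integral_const_mul, integral_sub hg (integrable_const c), ← hint,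
      integral_congr_ae hfc, sub_self, mul_zero]
  have hbound := norm_integral_exp_I_mul_sub_one_le ((hg.sub (integrable_const c)).const_mul t)
    ((hsq.const_mul (t ^ 2)).congr (hsq_h.mono fun u hu => hu.symm)) hmean
  rw [integral_congr_ae hfactor, integral_const_mul, norm_mul, norm_neg,
    norm_exp_I_mul_ofReal, one_mul]
  calc _ ≤ (∫ u, h u ^ 2 ∂μ) / 2 := hbound
    _ = _ := by rw [integral_congr_ae hsq_h, integral_const_mul]; ring

theorem setIntegral_Ioc_eq_sum_of_monotone {E : Type*} [NormedAddCommGroup E] [NormedSpace ℝ E]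
    {F : ℝ → E} {a : ℕ → ℝ} (ha : Monotone a) {n : ℕ}
    (hF : IntegrableOn F (Set.Ioc (a 0) (a n))) :
    ∫ x in Set.Ioc (a 0) (a n), F x =
      ∑ k ∈ Finset.range n, ∫ x in Set.Ioc (a k) (a (k + 1)), F x := by
  have hsub (k : ℕ) (hk : k < n) : Set.Ioc (a k) (a (k + 1)) ⊆ Set.Ioc (a 0) (a n) :=
    Set.Ioc_subset_Ioc (ha k.zero_le) (ha hk)
  rw [← intervalIntegral.integral_of_le (ha n.zero_le),
    ← intervalIntegral.sum_integral_adjacent_intervals fun k hk =>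
      (intervalIntegrable_iff_integrableOn_Ioc_of_le (ha k.le_succ)).2 (hF.mono_set (hsub k hk))]
  exact Finset.sum_congr rfl fun k _ => intervalIntegral.integral_of_le (ha k.le_succ)

theorem setIntegral_Ioc_zero_one_eq_sum {E : Type*} [NormedAddCommGroup E] [NormedSpace ℝ E]
    {F : ℝ → E} {m : ℕ} (hm : 0 < m) (hF : IntegrableOn F (Set.Ioc 0 1)) :
    ∫ x in Set.Ioc 0 1, F x =
      ∑ j ∈ Finset.range m, ∫ x in Set.Ioc ((j : ℝ) / m) (((j : ℝ) + 1) / m), F x := by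
  have hm' : (m : ℝ) ≠ 0 := Nat.cast_ne_zero.2 hm.ne'
  have ha : Monotone fun j : ℕ => (j : ℝ) / m := fun i j hij => by dsimp only; gcongr
  simpa [hm'] using setIntegral_Ioc_eq_sum_of_monotone ha (n := m) (by simpa [hm'] using hF)

/-- If `f` is constant on each interval `((j−1)/m, j/m]` and has the same integral
as `g` over each of these intervals, then for every real `t`,
`|∫₀¹ (e^{itf} − e^{itg})| ≤ (t²/2) ∫₀¹ (f − g)²`. -/
theorem oscillation_integral_bound
    (m : ℕ) (hm : 0 < m) (f g : ℝ → ℝ)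
    (hf : IntegrableOn f (Set.Ioc (0 : ℝ) 1))
    (hg : IntegrableOn g (Set.Ioc (0 : ℝ) 1))
    (hsq : IntegrableOn (fun u => (f u - g u) ^ 2) (Set.Ioc (0 : ℝ) 1))
    (hconst : ∀ j < m, ∀ u ∈ Set.Ioc ((j : ℝ) / m) (((j : ℝ) + 1) / m),
      ∀ v ∈ Set.Ioc ((j : ℝ) / m) (((j : ℝ) + 1) / m), f u = f v)
    (hint : ∀ j < m,
      ∫ u in Set.Ioc ((j : ℝ) / m) (((j : ℝ) + 1) / m), f u =
        ∫ u in Set.Ioc ((j : ℝ) / m) (((j : ℝ) + 1) / m), g u)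
    (t : ℝ) :
    ‖∫ u in Set.Ioc (0 : ℝ) 1,
        (Complex.exp (Complex.I * t * f u) - Complex.exp (Complex.I * t * g u))‖ ≤
      t ^ 2 / 2 * ∫ u in Set.Ioc (0 : ℝ) 1, (f u - g u) ^ 2 := by
  set S : ℕ → Set ℝ := fun j => Set.Ioc ((j : ℝ) / m) (((j : ℝ) + 1) / m)
  have hS_sub (j : ℕ) (hj : j < m) : S j ⊆ Set.Ioc 0 1 := by
    have hm' : (0 : ℝ) < m := Nat.cast_pos.2 hm
    have hj' : (j : ℝ) + 1 ≤ m := by exact_mod_cast hj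
    exact Set.Ioc_subset_Ioc (by positivity) ((div_le_one hm').2 hj')
  have hblock (j : ℕ) (hj : j < m) :
      ‖∫ u in S j, (exp (I * t * f u) - exp (I * t * g u))‖ ≤
        t ^ 2 / 2 * ∫ u in S j, (f u - g u) ^ 2 := by
    have hright : ((j : ℝ) + 1) / m ∈ S j := ⟨by gcongr; linarith, le_rfl⟩
    exact norm_integral_exp_sub_exp_le_of_ae_eq_const
      (ae_restrict_of_forall_mem measurableSet_Ioc fun u hu => hconst j hj u hu _ hright)
      (hg.mono_set (hS_sub j hj)) (hsq.mono_set (hS_sub j hj)) (hint j hj) t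
  have hexp (h : ℝ → ℝ) (hh : IntegrableOn h (Set.Ioc 0 1)) :
      IntegrableOn (fun u => exp (I * t * h u)) (Set.Ioc 0 1) := by
    have := integrable_exp_I_mul_ofReal (hh.aestronglyMeasurable.const_mul t)
    simp only [ofReal_mul, ← mul_assoc] at this
    exact this
  calc _ = ‖∑ j ∈ Finset.range m, ∫ u in S j, (exp (I * t * f u) - exp (I * t * g u))‖ := by
        rw [setIntegral_Ioc_zero_one_eq_sum hm (F := fun u => _ - _) ((hexp f hf).sub (hexp g hg))]
    _ ≤ ∑ j ∈ Finset.range m, t ^ 2 / 2 * ∫ u in S j, (f u - g u) ^ 2 :=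
        (norm_sum_le _ _).trans (Finset.sum_le_sum fun j hj => hblock j (Finset.mem_range.1 hj))
    _ = _ := by rw [← Finset.mul_sum, ← setIntegral_Ioc_zero_one_eq_sum hm hsq]
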